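/- Let g : [0,2π) → M_ℓ(ℂ) be a measurable function whose values are Hermitian positive definite matrices, such that g and θ ↦ log g(θ) are entrywise integrable with respect to dθ/(2π), and suppose the normalization ∫_0^{2π} g(θ) dθ/(2π) = 1 (the identity matrix) holds. Then the matrix B := ∫_0^{2π} log g(θ) dθ/(2π) is Hermitian and B ⪯ 0 (negative semidefinite). -/

import Mathlib

/-!
Since `log x ≤ x - 1` for `x > 0`, the functional calculus gives `log g(θ) ⪯ g(θ) - 1` for
every `θ`. Averaging over `θ` preserves the Loewner order, and by the normalization the
average of `g - 1` vanishes, so `B ⪯ 0`.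
-/

open MeasureTheory
open scoped ComplexOrder

/-- The logarithm of a Hermitian matrix, defined through the spectral theorem. -/
noncomputable def matLog {ℓ : ℕ} {A : Matrix (Fin ℓ) (Fin ℓ) ℂ}
    (hA : A.IsHermitian) : Matrix (Fin ℓ) (Fin ℓ) ℂ :=
  (hA.eigenvectorUnitary : Matrix (Fin ℓ) (Fin ℓ) ℂ) *
    Matrix.diagonal (fun i => (Real.log (hA.eigenvalues i) : ℂ)) *
    star (hA.eigenvectorUnitary : Matrix (Fin ℓ) (Fin ℓ) ℂ)

lemma cfc_log_le_sub_one {A : Type*} [Ring A] [StarRing A] [TopologicalSpace A] [Algebra ℝ A]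
    [ContinuousFunctionalCalculus ℝ A IsSelfAdjoint] [PartialOrder A] [StarOrderedRing A]
    [NonnegSpectrumClass ℝ A] {a : A} (ha : IsStrictlyPositive a) : cfc Real.log a ≤ a - 1 := by
  have hsa : IsSelfAdjoint a := ha.isSelfAdjoint
  calc cfc Real.log a ≤ cfc (fun x => x - 1) a :=
        cfc_mono (fun x hx => Real.log_le_sub_one_of_pos (ha.spectrum_pos hx))
          (Real.continuousOn_log.mono fun x hx => (ha.spectrum_pos hx).ne')
    _ = a - 1 := by rw [cfc_sub .., cfc_id' .., cfc_const_one ..]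

lemma matLog_eq_cfc {ℓ : ℕ} {A : Matrix (Fin ℓ) (Fin ℓ) ℂ} (hA : A.IsHermitian) :
    matLog hA = cfc Real.log A := by
  rw [hA.cfc_eq, Matrix.IsHermitian.cfc, Unitary.conjStarAlgAut_apply]
  rfl

open scoped MatrixOrder in
lemma sub_one_sub_matLog_posSemidef {ℓ : ℕ} {A : Matrix (Fin ℓ) (Fin ℓ) ℂ}
    (hA : A.PosDef) : (A - 1 - matLog hA.1).PosSemidef := by
  rw [← Matrix.le_iff, matLog_eq_cfc]
  exact cfc_log_le_sub_one hA.isStrictlyPositive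

namespace Matrix

variable {𝕜 n α : Type*} [RCLike 𝕜] [Fintype n] [MeasurableSpace α] {μ : Measure α}
  {F : α → Matrix n n 𝕜}

lemma dotProduct_mulVec_integral (hF : ∀ i j, Integrable (fun a => F a i j) μ)
    (x y : n → 𝕜) :
    x ⬝ᵥ (of fun i j => ∫ a, F a i j ∂μ) *ᵥ y = ∫ a, x ⬝ᵥ F a *ᵥ y ∂μ := by
  have hterm : ∀ i j, Integrable (fun a => x i * (F a i j * y j)) μ :=
    fun i j => ((hF i j).mul_const _).const_mul _
  simp only [dotProduct, mulVec, of_apply, Finset.mul_sum]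
  rw [integral_finsetSum _ fun i _ => integrable_finsetSum _ fun j _ => hterm i j]
  refine Finset.sum_congr rfl fun i _ => ?_
  rw [integral_finsetSum _ fun j _ => hterm i j]
  simp only [integral_const_mul, integral_mul_const]

lemma posSemidef_integral (hF : ∀ a, (F a).PosSemidef)
    (hFi : ∀ i j, Integrable (fun a => F a i j) μ) :
    (of fun i j => ∫ a, F a i j ∂μ).PosSemidef := by
  rw [posSemidef_iff_dotProduct_mulVec]
  refine ⟨?_, fun x => ?_⟩
  · ext i j
    rw [conjTranspose_apply, of_apply, of_apply, RCLike.star_def, ← integral_conj]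
    exact integral_congr_ae (ae_of_all _ fun a => (hF a).1.apply i j)
  · rw [dotProduct_mulVec_integral hFi]
    exact integral_nonneg fun a => (hF a).dotProduct_mulVec_nonneg x

end Matrix

theorem integral_log_nonpos_general {ℓ : ℕ}
    (g : ℝ → Matrix (Fin ℓ) (Fin ℓ) ℂ)
    (hg : ∀ θ, (g θ).PosDef)
    (hint : ∀ i j, IntegrableOn (fun θ => g θ i j) (Set.Ico 0 (2 * Real.pi)))
    (hlogint : ∀ i j,
      IntegrableOn (fun θ => matLog (hg θ).1 i j) (Set.Ico 0 (2 * Real.pi)))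
    (hnorm : (Matrix.of fun i j =>
        ((2 * Real.pi)⁻¹ : ℝ) • ∫ θ in Set.Ico 0 (2 * Real.pi), g θ i j) =
      (1 : Matrix (Fin ℓ) (Fin ℓ) ℂ)) :
    (Matrix.of fun i j =>
        ((2 * Real.pi)⁻¹ : ℝ) •
          ∫ θ in Set.Ico 0 (2 * Real.pi), matLog (hg θ).1 i j).IsHermitian ∧
    (-(Matrix.of fun i j =>
        ((2 * Real.pi)⁻¹ : ℝ) •
          ∫ θ in Set.Ico 0 (2 * Real.pi), matLog (hg θ).1 i j)).PosSemidef := by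
  set S := Set.Ico 0 (2 * Real.pi)
  set c : ℝ := (2 * Real.pi)⁻¹
  have hS : volume.real S = 2 * Real.pi := by simp [S, Real.pi_pos.le]
  have hc : c * (2 * Real.pi) = 1 := inv_mul_cancel₀ (by positivity)
  have hone : ∀ i j, IntegrableOn (fun _ => (1 : Matrix (Fin ℓ) (Fin ℓ) ℂ) i j) S :=
    fun i j => integrableOn_const measure_Ico_lt_top.ne
  have hgap : ∀ i j, IntegrableOn (fun θ => (g θ - 1 - matLog (hg θ).1) i j) S :=
    fun i j => ((hint i j).sub' (hone i j)).sub' (hlogint i j)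
  have hneg : -(Matrix.of fun i j => c • ∫ θ in S, matLog (hg θ).1 i j) =
      c • Matrix.of fun i j => ∫ θ in S, (g θ - 1 - matLog (hg θ).1) i j := by
    ext i j
    have hgij := congr_fun₂ hnorm i j
    simp only [Matrix.of_apply] at hgij
    simp only [Matrix.neg_apply, Matrix.smul_apply, Matrix.of_apply, Matrix.sub_apply]
    rw [integral_sub ((hint i j).sub' (hone i j)) (hlogint i j),
      integral_sub (hint i j) (hone i j), setIntegral_const, hS, smul_sub, smul_sub, hgij,
      smul_smul, hc, one_smul, sub_self, zero_sub]
  have hpsd := (Matrix.posSemidef_integral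
    (fun θ => sub_one_sub_matLog_posSemidef (hg θ)) hgap).smul (by positivity : 0 ≤ c)
  rw [← hneg] at hpsd
  exact ⟨by simpa using hpsd.1.neg, hpsd⟩

/-- If `g` takes Hermitian positive definite values, `g` and `log ∘ g` are entrywise
integrable on `[0,2π)` with respect to `dθ/(2π)`, and `∫ g dθ/2π = 1`, then
`B = ∫ log g dθ/2π` is Hermitian and negative semidefinite. -/
theorem integral_log_nonpos {ℓ : ℕ}
    (g : ℝ → Matrix (Fin ℓ) (Fin ℓ) ℂ)
    (hg : ∀ θ, (g θ).PosDef)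
    (hmeas : ∀ i j, Measurable fun θ => g θ i j)
    (hint : ∀ i j, IntegrableOn (fun θ => g θ i j) (Set.Ico 0 (2 * Real.pi)))
    (hlogint : ∀ i j,
      IntegrableOn (fun θ => matLog (hg θ).1 i j) (Set.Ico 0 (2 * Real.pi)))
    (hnorm : (Matrix.of fun i j =>
        ((2 * Real.pi)⁻¹ : ℝ) • ∫ θ in Set.Ico 0 (2 * Real.pi), g θ i j) =
      (1 : Matrix (Fin ℓ) (Fin ℓ) ℂ)) :
    (Matrix.of fun i j =>
        ((2 * Real.pi)⁻¹ : ℝ) •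
          ∫ θ in Set.Ico 0 (2 * Real.pi), matLog (hg θ).1 i j).IsHermitian ∧
    (-(Matrix.of fun i j =>
        ((2 * Real.pi)⁻¹ : ℝ) •
          ∫ θ in Set.Ico 0 (2 * Real.pi), matLog (hg θ).1 i j)).PosSemidef :=
  integral_log_nonpos_general g hg hint hlogint hnorm
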